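/- arXiv:1910.13623 — 4 statements merged into one kernel-verified Lean document; each statement's English description precedes it below -/
import Mathlib

section
/- Let n > j > n/2 be positive integers. For any partition of n into positive parts x_1 ≥ x_2 ≥ ... ≥ x_m with x_1 ≤ j, the sum of binom(x_i, 2) over all i is at most binom(j,2) + binom(n-j,2). -/
private lemma c2z (m : ℕ) : (2 * m.choose 2 : ℤ) = m * m - m := by
  induction m with
  | zero => simp
  | succ k ih =>
    rw [Nat.choose_succ_succ, Nat.choose_one_right]
    push_cast at ih ⊢
    ring_nf at ih ⊢
    linarith

private lemma key (a b c d : ℕ) (hab : a + b = c + d) (hda : d ≤ a) (hac : a ≤ c) :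
    a.choose 2 + b.choose 2 ≤ c.choose 2 + d.choose 2 := by
  have h := c2z a
  have h2 := c2z b
  have h3 := c2z c
  have h4 := c2z d
  have hcast : (a : ℤ) + b = c + d := by exact_mod_cast congrArg Nat.cast hab
  have hda' : (d : ℤ) ≤ a := by exact_mod_cast hda
  have hac' : (a : ℤ) ≤ c := by exact_mod_cast hac
  have : (2 * (a.choose 2 + b.choose 2) : ℤ) ≤ 2 * (c.choose 2 + d.choose 2) := by
    nlinarith [mul_nonneg (sub_nonneg.2 hac') (sub_nonneg.2 hda')]
  have : (↑(a.choose 2 + b.choose 2) : ℤ) ≤ ↑(c.choose 2 + d.choose 2) := by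
    push_cast; linarith
  exact_mod_cast this

private lemma main_lem (j : ℕ) : ∀ l : List ℕ, (∀ x ∈ l, x ≤ j) →
    (l.map (fun x => x.choose 2)).sum ≤ (min l.sum j).choose 2 + (l.sum - j).choose 2 := by
  intro l
  induction l with
  | nil => simp
  | cons x t ih =>
    intro hx
    have hxj : x ≤ j := hx x (by simp)
    have iht := ih (fun y hy => hx y (by simp [hy]))
    simp only [List.map_cons, List.sum_cons]
    set s := t.sum with hs
    rcases le_or_gt s j with hsj | hsj
    · have hmin : min s j = s := min_eq_left hsj
      have hsub : s - j = 0 := by omega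
      rw [hmin, hsub] at iht
      norm_num at iht
      rcases le_or_gt (x + s) j with hxs | hxs
      · have hmin2 : min (x + s) j = x + s := min_eq_left hxs
        have hsub2 : x + s - j = 0 := by omega
        rw [hmin2, hsub2]
        have hk := key x s (x + s) 0 (by omega) (by omega) (by omega)
        norm_num at hk ⊢
        linarith
      · have hmin2 : min (x + s) j = j := min_eq_right hxs.le
        rw [hmin2]
        rcases le_total x s with hc | hc
        · have hk := key s x j (x + s - j) (by omega) (by omega) hsj
          linarith
        · have hk := key x s j (x + s - j) (by omega) (by omega) hxj
          linarith
    · have hmin : min s j = j := min_eq_right hsj.le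
      have hmin2 : min (x + s) j = j := min_eq_right (by omega)
      rw [hmin] at iht
      rw [hmin2]
      have hstep : x.choose 2 + (s - j).choose 2 ≤ (x + s - j).choose 2 := by
        have := key x (s - j) (x + s - j) 0 (by omega) (by omega) (by omega)
        simpa using this
      have hmx : min (x + s) j = j := hmin2
      have heq : x + s - j = x + (s - j) := by omega
      rw [heq] at hstep ⊢
      linarith

theorem stmt_2 (n j : ℕ) (h1 : j < n) (h2 : n < 2 * j)
    (l : List ℕ) (hpos : ∀ x ∈ l, 0 < x ∧ x ≤ j) (hsum : l.sum = n) :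
    (l.map (fun x => x.choose 2)).sum ≤ j.choose 2 + (n - j).choose 2 := by
  have := main_lem j l (fun x hx => (hpos x hx).2)
  rw [hsum, min_eq_right h1.le] at this
  exact this
end

section
/- Let x, a be positive integers with h = ⌈3(a+1)/x⌉ and x > 3h. Then binom(x,2) − 2(a+1) > binom(x−h, 2) + binom(h, 2). -/
lemma two_mul_choose_two (n : ℕ) : (n.choose 2 : ℤ) * 2 = n * (n - 1) := by
  induction n with
  | zero => simp
  | succ m ih =>
    rw [Nat.choose_succ_succ, Nat.choose_one_right]
    push_cast
    push_cast at ih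
    nlinarith [ih]

theorem stmt_7 (x a : ℕ) (hx : 0 < x) (ha : 0 < a)
    (h : ℕ) (hh : h = ⌈(3 * ((a : ℚ) + 1)) / (x : ℚ)⌉₊)
    (hlt : x > 3 * h) :
    (x.choose 2 : ℤ) - 2 * ((a : ℤ) + 1) > ((x - h).choose 2 : ℤ) + (h.choose 2 : ℤ) := by
  have hq : (3 * ((a : ℚ) + 1)) / (x : ℚ) ≤ h := by
    rw [hh]; exact Nat.le_ceil _
  have hxq : (0 : ℚ) < (x : ℚ) := by exact_mod_cast hx
  have hmul : (3 * ((a : ℚ) + 1)) ≤ (h : ℚ) * x := by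
    rwa [div_le_iff₀ hxq] at hq
  have hmulZ : (3 : ℤ) * ((a : ℤ) + 1) ≤ (h : ℤ) * x := by exact_mod_cast hmul
  have hpos : 1 ≤ h := by
    rw [hh]
    exact Nat.ceil_pos.mpr (by positivity)
  have hle : h ≤ x := by omega
  have hcast : ((x - h : ℕ) : ℤ) = (x : ℤ) - h := by
    exact_mod_cast Int.ofNat_sub hle
  have e1 := two_mul_choose_two x
  have e2 := two_mul_choose_two (x - h)
  have e3 := two_mul_choose_two h
  rw [hcast] at e2
  have hX : (3 * h : ℤ) < x := by exact_mod_cast hlt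
  have hH : (1 : ℤ) ≤ h := by exact_mod_cast hpos
  nlinarith [e1, e2, e3, hmulZ, hX, hH]
end

section
/- Let g, j ≥ 1 be integers with k = 2j−1 and n = 2g. Suppose e_1 ≥ e_2 ≥ ... ≥ e_k ≥ 0 are integers with Σ e_i = binom(n,2) and e_1 ≥ g^2. Let a_i = e_i for i ≥ 2 and a_1 = e_1 − g^2 reordered so that a_1 ≥ ... ≥ a_{2j−1}. Then a_2 + a_4 + ... + a_{2j−2} ≤ binom(g,2) and a_3 + a_5 + ... + a_{2j−1} ≤ binom(g,2). -/
/-!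
Removing `g ^ 2` from `e 1` leaves the total `C(2g, 2) - g ^ 2 = 2 C(g, 2)` spread over the
nonincreasing, nonnegative terms `a 1 ≥ ⋯ ≥ a (2j-1)`. Comparing `a (2i) ≥ a (2i+1)` bounds the
odd-indexed sum by the even-indexed one, and comparing `a (2i-1) ≥ a (2i)` bounds the
even-indexed sum by `a 1` plus the odd-indexed one; as the total is `a 1` plus both sums, each
sum is at most half of it.
-/

open Finset

theorem Nat.choose_two_mul_two (g : ℕ) : (2 * g).choose 2 = g ^ 2 + 2 * g.choose 2 := by
  rw [two_mul, Nat.add_choose_eq]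
  simp [Nat.antidiagonal_succ]
  ring

theorem sum_Icc_eq_add_sum_pairs {M : Type*} [AddCommMonoid M] (a : ℕ → M) (m : ℕ) :
    ∑ i ∈ Icc 1 (2 * m + 1), a i = a 1 + ∑ i ∈ Icc 1 m, (a (2 * i) + a (2 * i + 1)) := by
  induction m with
  | zero => simp
  | succ m ih =>
    rw [show 2 * (m + 1) + 1 = 2 * m + 1 + 1 + 1 by ring, sum_Icc_succ_top (by omega),
      sum_Icc_succ_top (by omega), ih, sum_Icc_succ_top (by omega), add_assoc, add_assoc,
      mul_add_one]

section Alternating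

variable (a : ℕ → ℤ) (m : ℕ)

theorem add_sum_even_le_add_sum_odd (ha : ∀ i, 1 ≤ i → i < 2 * m + 1 → a (i + 1) ≤ a i) :
    a (2 * m + 1) + ∑ i ∈ Icc 1 m, a (2 * i) ≤ a 1 + ∑ i ∈ Icc 1 m, a (2 * i + 1) := by
  induction m with
  | zero => simp
  | succ m ih =>
    have ih := ih fun i h1 h2 => ha i h1 (by omega)
    have h := ha (2 * m + 1) (by omega) (by omega)
    rw [sum_Icc_succ_top (by omega), sum_Icc_succ_top (by omega)]
    simp only [mul_add_one] at h ⊢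
    linarith

theorem sum_odd_le_sum_even (ha : ∀ i, 1 ≤ i → i < 2 * m + 1 → a (i + 1) ≤ a i) :
    ∑ i ∈ Icc 1 m, a (2 * i + 1) ≤ ∑ i ∈ Icc 1 m, a (2 * i) :=
  sum_le_sum fun i hi => ha (2 * i) (by grind) (by grind)

theorem sum_even_le_and_sum_odd_le_of_sum_eq_two_mul {c : ℤ}
    (ha : ∀ i, 1 ≤ i → i < 2 * m + 1 → a (i + 1) ≤ a i) (hlast : 0 ≤ a (2 * m + 1))
    (hsum : ∑ i ∈ Icc 1 (2 * m + 1), a i = 2 * c) :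
    ∑ i ∈ Icc 1 m, a (2 * i) ≤ c ∧ ∑ i ∈ Icc 1 m, a (2 * i + 1) ≤ c := by
  rw [sum_Icc_eq_add_sum_pairs, sum_add_distrib] at hsum
  have := add_sum_even_le_add_sum_odd a m ha
  have := sum_odd_le_sum_even a m ha
  constructor <;> linarith

end Alternating

theorem nonneg_of_map_eq_cons {ι κ : Type*} {s : Finset ι} {t : Finset κ} {a : ι → ℤ}
    {e : κ → ℤ} {x : ℤ} (h : s.val.map a = x ::ₘ t.val.map e) (hx : 0 ≤ x)
    (he : ∀ i ∈ t, 0 ≤ e i) {i : ι} (hi : i ∈ s) : 0 ≤ a i := by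
  have hmem : a i ∈ x ::ₘ t.val.map e := h ▸ Multiset.mem_map_of_mem a hi
  rcases Multiset.mem_cons.mp hmem with hax | hax
  · exact hax ▸ hx
  · obtain ⟨i', hi', hei'⟩ := Multiset.mem_map.mp hax
    exact hei' ▸ he i' hi'

theorem stmt_17_general (g j k n : ℕ) (hj : 1 ≤ j)
    (hk : k = 2 * j - 1) (hn : n = 2 * g)
    (e a : ℕ → ℤ)
    (hnonneg : ∀ i, 1 ≤ i → i ≤ k → 0 ≤ e i)
    (hsum : ∑ i ∈ Finset.Icc 1 k, e i = (n.choose 2 : ℤ))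
    (he1 : (g : ℤ) ^ 2 ≤ e 1)
    (hamono : ∀ i, 1 ≤ i → i < k → a (i + 1) ≤ a i)
    (hperm : Multiset.map a (Finset.Icc 1 k).val
      = (e 1 - (g : ℤ) ^ 2) ::ₘ Multiset.map e (Finset.Icc 2 k).val) :
    (∑ i ∈ Finset.Icc 1 (j - 1), a (2 * i)) ≤ (g.choose 2 : ℤ) ∧
    (∑ i ∈ Finset.Icc 1 (j - 1), a (2 * i + 1)) ≤ (g.choose 2 : ℤ) := by
  obtain ⟨m, rfl⟩ : ∃ m, j = m + 1 := ⟨j - 1, by omega⟩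
  obtain rfl : k = 2 * m + 1 := by omega
  subst hn
  have hlast : 0 ≤ a (2 * m + 1) :=
    nonneg_of_map_eq_cons hperm (by linarith) (fun i hi => hnonneg i (by grind) (by grind))
      (by simp)
  have hsum_a :
      ∑ i ∈ Icc 1 (2 * m + 1), a i = (e 1 - g ^ 2) + ∑ i ∈ Icc 2 (2 * m + 1), e i := by
    rw [sum_eq_multiset_sum, hperm, Multiset.sum_cons, sum_eq_multiset_sum]
  rw [← add_sum_Ioc_eq_sum_Icc (by omega), ← Icc_add_one_left_eq_Ioc, Nat.choose_two_mul_two]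
    at hsum
  exact sum_even_le_and_sum_odd_le_of_sum_eq_two_mul a m hamono hlast
    (by push_cast at hsum; linarith)

theorem stmt_17 (g j k n : ℕ) (hg : 1 ≤ g) (hj : 1 ≤ j)
    (hk : k = 2 * j - 1) (hn : n = 2 * g)
    (e a : ℕ → ℤ)
    (hmono : ∀ i, 1 ≤ i → i < k → e (i + 1) ≤ e i)
    (hnonneg : ∀ i, 1 ≤ i → i ≤ k → 0 ≤ e i)
    (hsum : ∑ i ∈ Finset.Icc 1 k, e i = (n.choose 2 : ℤ))
    (he1 : (g : ℤ) ^ 2 ≤ e 1)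
    (hamono : ∀ i, 1 ≤ i → i < k → a (i + 1) ≤ a i)
    (hperm : Multiset.map a (Finset.Icc 1 k).val
      = (e 1 - (g : ℤ) ^ 2) ::ₘ Multiset.map e (Finset.Icc 2 k).val) :
    (∑ i ∈ Finset.Icc 1 (j - 1), a (2 * i)) ≤ (g.choose 2 : ℤ) ∧
    (∑ i ∈ Finset.Icc 1 (j - 1), a (2 * i + 1)) ≤ (g.choose 2 : ℤ) :=
  stmt_17_general g j k n hj hk hn e a hnonneg hsum he1 hamono hperm
end

section
/- Let n, j be positive integers with n/2 < j < n, and set h = n − j. Then among all partitions x_1 + ... + x_m = n into positive integer parts each at most j, the maximum of Σ_i x_i(x_i−1)/2 is attained by the partition {j, n−j}. -/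
lemma c2_add (a b : ℕ) : (a + b).choose 2 = a.choose 2 + b.choose 2 + a * b := by
  induction a with
  | zero => simp
  | succ a ih =>
    have h : a + 1 + b = (a + b) + 1 := by ring
    rw [h, show (a+b)+1 = (a+b).succ from rfl, Nat.choose_succ_succ,
      show a+1 = a.succ from rfl, Nat.choose_succ_succ, Nat.choose_one_right,
      Nat.choose_one_right, ih, Nat.succ_mul]
    ring

lemma c2_split (a b : ℕ) (h : a ≤ b) :
    b.choose 2 = a.choose 2 + (b - a).choose 2 + a * (b - a) := by
  have := c2_add a (b - a)
  rwa [Nat.add_sub_cancel' h] at this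

lemma list_c2_le (l : List ℕ) : (l.map (fun x => x.choose 2)).sum ≤ l.sum.choose 2 := by
  induction l with
  | nil => simp
  | cons x t ih =>
    simp only [List.map_cons, List.sum_cons]
    rw [c2_add]
    omega

lemma key_s19 (j : ℕ) (hj : 0 < j) : ∀ l : List ℕ, (∀ x ∈ l, x ≤ j) → j ≤ l.sum →
    (l.map (fun x => x.choose 2)).sum ≤ j.choose 2 + (l.sum - j).choose 2 := by
  intro l
  induction l with
  | nil => intro _ h; simp at h; omega
  | cons x t ih =>
    intro hb hs
    simp only [List.map_cons, List.sum_cons] at *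
    have hx : x ≤ j := hb x (by simp)
    by_cases hm : j ≤ t.sum
    · have h1 := ih (fun y hy => hb y (by simp [hy])) hm
      have h2 : x + t.sum - j = x + (t.sum - j) := by omega
      rw [h2, c2_add]
      omega
    · push_neg at hm
      have h1 := list_c2_le t
      set m := t.sum with hmdef
      set d := x + m - j with hd
      have hdx : d ≤ x := by omega
      have e1 := c2_split x j hx
      have e2 := c2_split d m (by omega)
      have e3 : m - d = j - x := by omega
      rw [e3] at e2
      have e4 : d * (j - x) ≤ x * (j - x) := Nat.mul_le_mul_right _ hdx
      omega

theorem stmt_19 (n j : ℕ) (h1 : j < n) (h2 : n < 2 * j) :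
    IsGreatest
      {s : ℕ | ∃ l : List ℕ, (∀ x ∈ l, 0 < x ∧ x ≤ j) ∧ l.sum = n ∧
        s = (l.map (fun x => x.choose 2)).sum} (j.choose 2 + (n - j).choose 2) ∧
    ([j, n - j].map (fun x => x.choose 2)).sum = j.choose 2 + (n - j).choose 2 := by
  have hj : 0 < j := by omega
  refine ⟨⟨⟨[j, n - j], ?_, ?_, ?_⟩, ?_⟩, ?_⟩
  · intro x hx; simp at hx; rcases hx with rfl | rfl <;> omega
  · simp; omega
  · simp
  · rintro s ⟨l, hb, hsum, rfl⟩
    have := key_s19 j hj l (fun x hx => (hb x hx).2) (by omega)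
    rw [hsum] at this
    exact this
  · simp
end
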